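/- arXiv:1903.04096 — 3 statements merged into one kernel-verified Lean document; each statement's English description precedes it below -/
import Mathlib

section
/- Let A ∈ ℝ^{n×n}, B ∈ ℝ^{n×m}, H ∈ ℝ^{n×q}, let T ∈ {0,1}^{m×n} be a binary matrix, and let R ∈ {0,1}^{n×n} be a symmetric binary matrix with R ≥ I_n. The following are equivalent: (1) there exist X ∈ Sparse(R^{n−1}) with X ≻ 0, Y ∈ Sparse(T), and Z ∈ ℝ^{m×m} such that the block matrix [[Z, Y], [Yᵀ, X]] ⪰ 0 and AX + XAᵀ + BY + YᵀBᵀ + HHᵀ ≺ 0; (2) there exist Y ∈ Sparse(T) and P ∈ Sparse(R^{n−1}) with P ≻ 0 such that, setting K = YP, one has (A + BK)ᵀP + P(A + BK) + PHHᵀP ≺ 0. -/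
/-!
Since `R` is reflexive, every row of the structural power `R^k` grows with `k`, starts with at
least one entry, and stays constant once it fails to grow; hence it is constant from `k = n - 1`
on, and `R^{n-1}` is reflexive and transitive. The matrices with a reflexive and transitive
sparsity pattern form a finite-dimensional, hence Artinian, subalgebra, which contains the inverse
of each of its invertible elements; so `X ↦ X⁻¹` preserves `Sparse(R^{n-1})`. For `P = X⁻¹` the
Lyapunov matrix is the congruence `P (AX + XAᵀ + BY + YᵀBᵀ + HHᵀ) P`, and the block condition
holds with `Z = Y P Yᵀ`, whose Schur complement with respect to `X` vanishes.
-/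

open Matrix

/-- Structural product of binary (Boolean) matrices:
`(sprod X Z) i j = true` iff `∃ k, X i k = true ∧ Z k j = true`. -/
def sprod {m n p : ℕ} (X : Matrix (Fin m) (Fin n) Bool) (Z : Matrix (Fin n) (Fin p) Bool) :
    Matrix (Fin m) (Fin p) Bool :=
  Matrix.of fun i j => decide (∃ k, X i k = true ∧ Z k j = true)

/-- Structural power of a binary matrix, with `spow R 0 = I`. -/
def spow {n : ℕ} (R : Matrix (Fin n) (Fin n) Bool) : ℕ → Matrix (Fin n) (Fin n) Bool
  | 0 => Matrix.of fun i j => decide (i = j)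
  | k + 1 => sprod (spow R k) R

/-- `Y` belongs to the sparsity subspace `Sparse(X)`. -/
def InSparse {m n : ℕ} (X : Matrix (Fin m) (Fin n) Bool) (Y : Matrix (Fin m) (Fin n) ℝ) : Prop :=
  ∀ i j, X i j = false → Y i j = 0

/-- The binary matrix encoding the sparsity pattern of a real matrix. -/
noncomputable def Struct {m n : ℕ} (Y : Matrix (Fin m) (Fin n) ℝ) : Matrix (Fin m) (Fin n) Bool :=
  Matrix.of fun i j => decide (Y i j ≠ 0)

/-- Entrywise order on binary matrices: `leB X X'` means `X ≤ X'`. -/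
def leB {m n : ℕ} (X X' : Matrix (Fin m) (Fin n) Bool) : Prop :=
  ∀ i j, X i j = true → X' i j = true

lemma sprod_apply_eq_true {m n p : ℕ} {X : Matrix (Fin m) (Fin n) Bool}
    {Z : Matrix (Fin n) (Fin p) Bool} {i : Fin m} {j : Fin p} :
    sprod X Z i j = true ↔ ∃ k, X i k = true ∧ Z k j = true := by
  simp [sprod]

section spow

variable {n : ℕ} {R : Matrix (Fin n) (Fin n) Bool}

lemma spow_zero_apply_eq_true {i j : Fin n} : spow R 0 i j = true ↔ i = j := by
  simp [spow]

lemma spow_succ_apply_eq_true {k : ℕ} {i j : Fin n} :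
    spow R (k + 1) i j = true ↔ ∃ l, spow R k i l = true ∧ R l j = true :=
  sprod_apply_eq_true

lemma spow_add_apply_eq_true {a b : ℕ} {i l j : Fin n} (hil : spow R a i l = true)
    (hlj : spow R b l j = true) : spow R (a + b) i j = true := by
  induction b generalizing j with
  | zero => rwa [spow_zero_apply_eq_true.mp hlj] at hil
  | succ b ih =>
    obtain ⟨l', hll', hl'j⟩ := spow_succ_apply_eq_true.mp hlj
    exact spow_succ_apply_eq_true.mpr ⟨l', ih hll', hl'j⟩

lemma spow_apply_self (hR : ∀ i, R i i = true) (k : ℕ) (i : Fin n) : spow R k i i = true := by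
  induction k with
  | zero => exact spow_zero_apply_eq_true.mpr rfl
  | succ k ih => exact spow_succ_apply_eq_true.mpr ⟨i, ih, hR i⟩

lemma leB_spow_of_le (hR : ∀ i, R i i = true) {k k' : ℕ} (h : k ≤ k') :
    leB (spow R k) (spow R k') := by
  intro i j hij
  obtain ⟨d, rfl⟩ := Nat.exists_eq_add_of_le h
  exact spow_add_apply_eq_true hij (spow_apply_self hR d j)

lemma leB_spow_pred (hR : ∀ i, R i i = true) (k : ℕ) : leB (spow R k) (spow R (n - 1)) := by
  rcases le_total k (n - 1) with hk | hk
  · exact leB_spow_of_le hR hk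
  intro i j hij
  classical
  set row : ℕ → Finset (Fin n) := fun k => {j | spow R k i j = true}
  have mem_row : ∀ k j, j ∈ row k ↔ spow R k i j = true := by simp [row]
  have row_mono : Monotone row := fun k k' h j => by
    simpa only [mem_row] using leB_spow_of_le hR h i j
  have card_row_pos : ∀ k, 0 < (row k).card := fun k =>
    Finset.card_pos.mpr ⟨i, (mem_row k i).mpr (spow_apply_self hR k i)⟩
  have row_stall : ∀ k, row k = row (k + 1) → row (k + 1) = row (k + 2) := by
    intro k h
    ext j
    have h' : ∀ l, spow R (k + 1) i l = true ↔ spow R k i l = true := fun l => by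
      rw [← mem_row, ← mem_row, h]
    simp only [mem_row]
    exact spow_succ_apply_eq_true.trans <|
      (exists_congr fun l => and_congr_left' (h' l).symm).trans spow_succ_apply_eq_true.symm
  -- Every row contains `i`, so `#(row k) - 1 ≤ n - 1`: this yields the bound `n - 1`, not `n`.
  have card_stab := Nat.stabilises_of_monotone (f := fun k => (row k).card - 1) (b := n - 1)
    (fun k k' h => Nat.sub_le_sub_right (Finset.card_le_card (row_mono h)) 1)
    (fun k => Nat.sub_le_sub_right ((Finset.card_le_univ _).trans_eq (Fintype.card_fin n)) 1)
    (fun k h => by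
      have := Finset.eq_of_subset_of_card_le (row_mono (k.le_add_right 1))
        (by have := card_row_pos k; have := card_row_pos (k + 1); omega)
      simp only [row_stall k this]) hk
  have hrow : row (n - 1) = row k := by
    refine Finset.eq_of_subset_of_card_le (row_mono hk) ?_
    have := card_row_pos k; have := card_row_pos (n - 1); omega
  rwa [← mem_row, ← hrow, mem_row] at hij

lemma spow_pred_apply_trans (hR : ∀ i, R i i = true) {i l j : Fin n}
    (hil : spow R (n - 1) i l = true) (hlj : spow R (n - 1) l j = true) :
    spow R (n - 1) i j = true :=
  leB_spow_pred hR _ i j (spow_add_apply_eq_true hil hlj)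

end spow

theorem Subalgebra.ringInverse_mem {K A : Type*} [CommRing K] [Ring A] [Algebra K A]
    (S : Subalgebra K A) [IsArtinianRing S] {x : A} (hx : x ∈ S) : Ring.inverse x ∈ S := by
  by_cases hxu : IsUnit x
  · have hreg : IsRightRegular (⟨x, hx⟩ : S) :=
      fun a b h => Subtype.ext (hxu.isRegular.2 (congrArg Subtype.val h))
    obtain ⟨u, hu⟩ := IsArtinianRing.isUnit_iff_isRightRegular.mpr hreg
    have hx' : x = Units.map (S.val : S →* A) u := by rw [Units.coe_map, hu]; rfl
    rw [hx', Ring.inverse_unit, ← map_inv, Units.coe_map]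
    exact Subtype.prop _
  · rw [Ring.inverse_non_unit x hxu]
    exact S.zero_mem

section sparse

variable {n : ℕ} {Q : Matrix (Fin n) (Fin n) Bool}

lemma InSparse.mul (htrans : ∀ i l j, Q i l = true → Q l j = true → Q i j = true)
    {M N : Matrix (Fin n) (Fin n) ℝ} (hM : InSparse Q M) (hN : InSparse Q N) :
    InSparse Q (M * N) := by
  intro i j hij
  rw [Matrix.mul_apply]
  refine Finset.sum_eq_zero fun l _ => ?_
  cases hil : Q i l
  · rw [hM i l hil, zero_mul]
  · cases hlj : Q l j
    · rw [hN l j hlj, mul_zero]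
    · simp [htrans i l j hil hlj] at hij

lemma InSparse.algebraMap (hrefl : ∀ i, Q i i = true) (r : ℝ) :
    InSparse Q (algebraMap ℝ (Matrix (Fin n) (Fin n) ℝ) r) := by
  intro i j hij
  have : i ≠ j := by rintro rfl; simp [hrefl i] at hij
  simp [Matrix.algebraMap_eq_diagonal, this]

def sparseSubalgebra (Q : Matrix (Fin n) (Fin n) Bool) (hrefl : ∀ i, Q i i = true)
    (htrans : ∀ i l j, Q i l = true → Q l j = true → Q i j = true) :
    Subalgebra ℝ (Matrix (Fin n) (Fin n) ℝ) where
  carrier := {M | InSparse Q M}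
  mul_mem' := InSparse.mul htrans
  add_mem' {M N} hM hN i j hij := by simp [hM i j hij, hN i j hij]
  algebraMap_mem' := InSparse.algebraMap hrefl

lemma InSparse.inv (hrefl : ∀ i, Q i i = true)
    (htrans : ∀ i l j, Q i l = true → Q l j = true → Q i j = true)
    {M : Matrix (Fin n) (Fin n) ℝ} (hM : InSparse Q M) : InSparse Q M⁻¹ := by
  have : IsArtinianRing (sparseSubalgebra Q hrefl htrans) := .of_finite ℝ _
  rw [Matrix.nonsing_inv_eq_ringInverse]
  exact (sparseSubalgebra Q hrefl htrans).ringInverse_mem hM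

end sparse

section lyapunov

variable {ι κ : Type*} [Fintype ι] [DecidableEq ι] [Fintype κ]

lemma neg_lyapunov_posDef_iff {μ : Type*} [Fintype μ] (A : Matrix ι ι ℝ) (B : Matrix ι κ ℝ)
    (H : Matrix ι μ ℝ) (Y : Matrix κ ι ℝ) {X P : Matrix ι ι ℝ} (hP : P.PosDef) (hXP : X * P = 1) :
    (-((A + B * (Y * P))ᵀ * P + P * (A + B * (Y * P)) + P * H * Hᵀ * P)).PosDef ↔
      (-(A * X + X * Aᵀ + B * Y + Yᵀ * Bᵀ + H * Hᵀ)).PosDef := by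
  have hPX : P * X = 1 := mul_eq_one_comm.mp hXP
  have hPt : Pᵀ = P := (conjTranspose_eq_transpose_of_trivial P).symm.trans hP.isHermitian.eq
  have hcongr : -((A + B * (Y * P))ᵀ * P + P * (A + B * (Y * P)) + P * H * Hᵀ * P) =
      star P * (-(A * X + X * Aᵀ + B * Y + Yᵀ * Bᵀ + H * Hᵀ)) * P := by
    rw [star_eq_conjTranspose, conjTranspose_eq_transpose_of_trivial, hPt]
    simp only [transpose_add, transpose_mul, hPt, Matrix.mul_add, Matrix.add_mul, Matrix.mul_neg,
      Matrix.neg_mul, Matrix.mul_assoc, hXP, ← Matrix.mul_assoc P X, hPX, Matrix.mul_one,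
      Matrix.one_mul]
    abel
  rw [hcongr]
  exact Matrix.IsUnit.posDef_star_left_conjugate_iff hP.isUnit

lemma posSemidef_fromBlocks_mul_inv_mul_transpose {X : Matrix ι ι ℝ} (hX : X.PosDef)
    (Y : Matrix κ ι ℝ) : (fromBlocks (Y * X⁻¹ * Yᵀ) Y Yᵀ X).PosSemidef := by
  have := hX.isUnit.invertible
  rw [← conjTranspose_eq_transpose_of_trivial, PosDef.fromBlocks₂₂ _ _ hX, sub_self]
  exact PosSemidef.zero

end lyapunov

theorem convex_restriction_feasibility_iff_separable_lyapunov_general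
    {n m q : ℕ} (A : Matrix (Fin n) (Fin n) ℝ) (B : Matrix (Fin n) (Fin m) ℝ)
    (H : Matrix (Fin n) (Fin q) ℝ) (T : Matrix (Fin m) (Fin n) Bool)
    (R : Matrix (Fin n) (Fin n) Bool)
    (hdiag : ∀ i, R i i = true) :
    (∃ (X : Matrix (Fin n) (Fin n) ℝ) (Y : Matrix (Fin m) (Fin n) ℝ)
        (Z : Matrix (Fin m) (Fin m) ℝ),
          InSparse (spow R (n - 1)) X ∧ X.PosDef ∧ InSparse T Y ∧
          (Matrix.fromBlocks Z Y Yᵀ X).PosSemidef ∧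
          (-(A * X + X * Aᵀ + B * Y + Yᵀ * Bᵀ + H * Hᵀ)).PosDef) ↔
    (∃ (Y : Matrix (Fin m) (Fin n) ℝ) (P : Matrix (Fin n) (Fin n) ℝ),
        InSparse T Y ∧ InSparse (spow R (n - 1)) P ∧ P.PosDef ∧
        (-((A + B * (Y * P))ᵀ * P + P * (A + B * (Y * P)) + P * H * Hᵀ * P)).PosDef) := by
  have hrefl : ∀ i, spow R (n - 1) i i = true := spow_apply_self hdiag _
  have htrans : ∀ i l j, spow R (n - 1) i l = true → spow R (n - 1) l j = true →
      spow R (n - 1) i j = true := fun _ _ _ => spow_pred_apply_trans hdiag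
  constructor
  · rintro ⟨X, Y, -, hXs, hX, hYs, -, hlmi⟩
    have hXdet := X.isUnit_iff_isUnit_det.mp hX.isUnit
    refine ⟨Y, X⁻¹, hYs, hXs.inv hrefl htrans, hX.inv, ?_⟩
    exact (neg_lyapunov_posDef_iff A B H Y hX.inv (mul_nonsing_inv X hXdet)).mpr hlmi
  · rintro ⟨Y, P, hYs, hPs, hP, hlyap⟩
    have hPdet := P.isUnit_iff_isUnit_det.mp hP.isUnit
    refine ⟨P⁻¹, Y, Y * P * Yᵀ, hPs.inv hrefl htrans, hP.inv, hYs, ?_,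
      (neg_lyapunov_posDef_iff A B H Y hP (nonsing_inv_mul P hPdet)).mp hlyap⟩
    simpa only [nonsing_inv_nonsing_inv P hPdet] using
      posSemidef_fromBlocks_mul_inv_mul_transpose hP.inv Y

/-- Theorem 2: feasibility of the convex restriction
`P_{T,R^{n-1}}` is equivalent to the existence of a suitably structured
separable Lyapunov certificate.  Negative (semi)definiteness of a symmetric
matrix `M` is encoded as `(-M).PosDef`. -/
theorem convex_restriction_feasibility_iff_separable_lyapunov
    {n m q : ℕ} (A : Matrix (Fin n) (Fin n) ℝ) (B : Matrix (Fin n) (Fin m) ℝ)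
    (H : Matrix (Fin n) (Fin q) ℝ) (T : Matrix (Fin m) (Fin n) Bool)
    (R : Matrix (Fin n) (Fin n) Bool)
    (hsym : ∀ i j, R i j = R j i) (hdiag : ∀ i, R i i = true) :
    (∃ (X : Matrix (Fin n) (Fin n) ℝ) (Y : Matrix (Fin m) (Fin n) ℝ)
        (Z : Matrix (Fin m) (Fin m) ℝ),
          InSparse (spow R (n - 1)) X ∧ X.PosDef ∧ InSparse T Y ∧
          (Matrix.fromBlocks Z Y Yᵀ X).PosSemidef ∧
          (-(A * X + X * Aᵀ + B * Y + Yᵀ * Bᵀ + H * Hᵀ)).PosDef) ↔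
    (∃ (Y : Matrix (Fin m) (Fin n) ℝ) (P : Matrix (Fin n) (Fin n) ℝ),
        InSparse T Y ∧ InSparse (spow R (n - 1)) P ∧ P.PosDef ∧
        (-((A + B * (Y * P))ᵀ * P + P * (A + B * (Y * P)) + P * H * Hᵀ * P)).PosDef) :=
  convex_restriction_feasibility_iff_separable_lyapunov_general A B H T R hdiag
end

section
/- Let R ∈ {0,1}^{n×n} be a binary matrix with R ≥ I_n. Then there exists an invertible matrix X ∈ ℝ^{n×n} with X ∈ Sparse(R) such that Struct(X⁻¹) = R^{n−1}, i.e., (X⁻¹)_{ij} ≠ 0 if and only if (R^{n−1})_{ij} = 1, where R^{n−1} is the (n−1)-fold structural power of R. -/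
open Matrix

/-!
Take `X = 1 - c • B`, where `B` is the real `0/1` matrix with pattern `R` and `c > 0` is so small
that the Neumann series converges: `X⁻¹ = ∑ₖ cᵏ Bᵏ`. All terms are entrywise nonnegative, so
`(X⁻¹)ᵢⱼ ≠ 0` iff `(Bᵏ)ᵢⱼ ≠ 0` for some `k`, i.e. iff `(Rᵏ)ᵢⱼ = 1` for some `k`. By
Cayley–Hamilton every `Bᵏ` is a combination of `B⁰, …, Bⁿ⁻¹`, so `k < n` suffices, and since
`R ≥ I` the structural powers increase with `k`, leaving exactly `Rⁿ⁻¹`.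
-/

theorem struct_apply_eq_true_iff {m n : ℕ} (Y : Matrix (Fin m) (Fin n) ℝ) (i : Fin m)
    (j : Fin n) :
    Struct Y i j = true ↔ Y i j ≠ 0 := by
  simp [Struct]

theorem struct_mul_of_nonneg {m n p : ℕ} {P : Matrix (Fin m) (Fin n) ℝ}
    {Q : Matrix (Fin n) (Fin p) ℝ} (hP : ∀ i j, 0 ≤ P i j) (hQ : ∀ i j, 0 ≤ Q i j) :
    Struct (P * Q) = sprod (Struct P) (Struct Q) := by
  ext i j
  rw [Bool.eq_iff_iff, struct_apply_eq_true_iff, mul_apply, ne_eq,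
    Finset.sum_eq_zero_iff_of_nonneg fun l _ => mul_nonneg (hP i l) (hQ l j)]
  simp [sprod, struct_apply_eq_true_iff]

theorem struct_pow_of_nonneg {n : ℕ} {A : Matrix (Fin n) (Fin n) ℝ} (hA : ∀ i j, 0 ≤ A i j) :
    ∀ k, Struct (A ^ k) = spow (Struct A) k
  | 0 => by ext i j; simp [Struct, spow, one_apply]
  | k + 1 => by
    rw [pow_succ, struct_mul_of_nonneg (pow_apply_nonneg hA k) hA, struct_pow_of_nonneg hA k, spow]

theorem leB_spow_succ {n : ℕ} {R : Matrix (Fin n) (Fin n) Bool} (hdiag : ∀ i, R i i = true)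
    (k : ℕ) : leB (spow R k) (spow R (k + 1)) := fun i j h => by
  simpa [spow, sprod] using ⟨j, h, hdiag j⟩

theorem leB_spow_of_le_s5 {n : ℕ} {R : Matrix (Fin n) (Fin n) Bool} (hdiag : ∀ i, R i i = true)
    {k l : ℕ} (hkl : k ≤ l) : leB (spow R k) (spow R l) := by
  induction l, hkl using Nat.le_induction with
  | base => exact fun _ _ => id
  | succ l _ ih => exact fun i j h => leB_spow_succ hdiag l i j (ih i j h)

theorem exists_lt_spow_iff_spow_sub_one {n : ℕ} {R : Matrix (Fin n) (Fin n) Bool}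
    (hdiag : ∀ i, R i i = true) (i j : Fin n) :
    (∃ k < n, spow R k i j = true) ↔ spow R (n - 1) i j = true :=
  ⟨fun ⟨_, hk, h⟩ => leB_spow_of_le_s5 hdiag (Nat.le_pred_of_lt hk) i j h,
    fun h => ⟨n - 1, Nat.sub_lt i.pos one_pos, h⟩⟩

theorem Matrix.forall_pow_apply_eq_zero_iff_forall_lt_card {ι R : Type*} [Fintype ι]
    [DecidableEq ι] [CommRing R] [Nontrivial R] (M : Matrix ι ι R) (i j : ι) :
    (∀ k, (M ^ k) i j = 0) ↔ ∀ k < Fintype.card ι, (M ^ k) i j = 0 := by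
  refine ⟨fun h k _ => h k, fun hlow k => ?_⟩
  have hcard : M.charpoly ≠ 1 := fun h => by
    have := M.charpoly_natDegree_eq_dim
    rw [h, Polynomial.natDegree_one] at this
    exact (Fintype.card_pos_iff.mpr ⟨i⟩).ne this
  rw [pow_eq_aeval_mod_charpoly, Polynomial.aeval_eq_sum_range' (n := Fintype.card ι)]
  · simp only [sum_apply, smul_apply, smul_eq_mul]
    exact Finset.sum_eq_zero fun m hm => by rw [hlow m (Finset.mem_range.mp hm), mul_zero]
  · rw [← M.charpoly_natDegree_eq_dim]
    exact Polynomial.natDegree_modByMonic_lt _ M.charpoly_monic hcard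

section NeumannSeries

open scoped Matrix.Norms.Operator

theorem Matrix.inv_one_sub_apply_eq_zero_iff_of_nonneg {ι : Type*} [Fintype ι] [DecidableEq ι]
    {A : Matrix ι ι ℝ} (hA : ∀ i j, 0 ≤ A i j) (hnorm : ‖A‖ < 1) (i j : ι) :
    (1 - A)⁻¹ i j = 0 ↔ ∀ k, (A ^ k) i j = 0 := by
  have hsum : HasSum (fun k => (A ^ k) i j) ((1 - A)⁻¹ i j) := by
    rw [nonsing_inv_eq_ringInverse]
    exact Pi.hasSum.mp (Pi.hasSum.mp (hasSum_geom_series_inverse A hnorm) i) j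
  constructor
  · intro h
    rw [h, hasSum_zero_iff_of_nonneg fun k => pow_apply_nonneg hA k i j] at hsum
    exact funext_iff.mp hsum
  · intro h
    exact hsum.unique (by simpa only [h] using hasSum_zero)

theorem Matrix.exists_isUnit_one_sub_smul_and_inv_apply_eq_zero_iff {ι : Type*} [Fintype ι]
    [DecidableEq ι] {A : Matrix ι ι ℝ} (hA : ∀ i j, 0 ≤ A i j) :
    ∃ c : ℝ, IsUnit (1 - c • A) ∧
      ∀ i j, (1 - c • A)⁻¹ i j = 0 ↔ ∀ k, (A ^ k) i j = 0 := by
  set c := (‖A‖ + 1)⁻¹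
  have hc : 0 < c := by positivity
  have hnorm : ‖c • A‖ < 1 := by
    rw [norm_smul, Real.norm_of_nonneg hc.le, inv_mul_lt_one₀ (by positivity)]
    exact lt_add_one _
  refine ⟨c, isUnit_one_sub_of_norm_lt_one hnorm, fun i j => ?_⟩
  have hcA : ∀ i j, 0 ≤ (c • A) i j := fun i j => smul_nonneg hc.le (hA i j)
  rw [inv_one_sub_apply_eq_zero_iff_of_nonneg hcA hnorm]
  simp [smul_pow, hc.ne']

end NeumannSeries

/-- Lemma A1, part 2: if `R ≥ Iₙ`, there exists an invertible
`X ∈ Sparse(R)` with `Struct(X⁻¹) = R^{n-1}`, i.e. `(X⁻¹)_{ij} ≠ 0` iff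
`(R^{n-1})_{ij} = 1`. -/
theorem exists_sparse_invertible_with_fullest_inverse {n : ℕ}
    (R : Matrix (Fin n) (Fin n) Bool) (hdiag : ∀ i, R i i = true) :
    ∃ X : Matrix (Fin n) (Fin n) ℝ, IsUnit X ∧ InSparse R X ∧
      Struct X⁻¹ = spow R (n - 1) := by
  set B : Matrix (Fin n) (Fin n) ℝ := R.map fun b => if b then 1 else 0
  have hB : ∀ i j, 0 ≤ B i j := fun i j => by by_cases h : R i j <;> simp [B, h]
  have hBR : Struct B = R := by ext i j; by_cases h : R i j <;> simp [B, Struct, h]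
  obtain ⟨c, hunit, hinv⟩ := exists_isUnit_one_sub_smul_and_inv_apply_eq_zero_iff hB
  refine ⟨1 - c • B, hunit, fun i j hij => ?_, ?_⟩
  · have hij' : i ≠ j := by rintro rfl; simp [hdiag] at hij
    simp [B, hij, one_apply_ne hij']
  · ext i j
    rw [Bool.eq_iff_iff, struct_apply_eq_true_iff, ne_eq, hinv,
      forall_pow_apply_eq_zero_iff_forall_lt_card, Fintype.card_fin,
      ← exists_lt_spow_iff_spow_sub_one hdiag]
    simp only [← hBR, ← struct_pow_of_nonneg hB, struct_apply_eq_true_iff, not_forall,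
      exists_prop, ne_eq]
end

section
/- Let T ∈ {0,1}^{m×n} be a binary matrix and let R ∈ {0,1}^{n×n} be a binary matrix with R ≥ I_n. Then there exist an invertible matrix X ∈ Sparse(R) and a matrix Y ∈ Sparse(T) such that Struct(YX⁻¹) = TR^{n−1}, where TR^{n−1} is the structural product of T with the (n−1)-fold structural power of R. In particular, if TR^{n−1} ≰ S for a binary matrix S ∈ {0,1}^{m×n}, then there exist Y ∈ Sparse(T) and invertible X ∈ Sparse(R) with YX⁻¹ ∉ Sparse(S). -/
/-!
Scale the `0`/`1` matrix of `R` to a nonnegative `C` with `‖C‖ < 1` and take `X = 1 - C`; it lies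
in `Sparse(R)` because `R` has a full diagonal. The Neumann series `X⁻¹ = ∑ Cᵖ` is entrywise
nonnegative, and `(Cᵖ)ᵢⱼ > 0` exactly when `Rᵖ` has a `1` at `(i, j)`. By Cayley–Hamilton each `Cᵖ`
is a combination of `C⁰, …, Cⁿ⁻¹`, and the positive diagonal makes the supports of the `Cᵖ`
increase with `p`, so the support of `X⁻¹` is `Rⁿ⁻¹`. With `Y` the `0`/`1` matrix of `T`, the
product `Y X⁻¹` of nonnegative matrices has no cancellation, hence support `T Rⁿ⁻¹`.
-/

open Matrix

namespace Matrix

variable {ι κ ν 𝕜 : Type*} [Fintype κ] [CommRing 𝕜] [LinearOrder 𝕜] [IsStrictOrderedRing 𝕜]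

lemma mul_apply_nonneg {A : Matrix ι κ 𝕜} {B : Matrix κ ν 𝕜} (hA : ∀ i j, 0 ≤ A i j)
    (hB : ∀ i j, 0 ≤ B i j) (i : ι) (k : ν) : 0 ≤ (A * B) i k :=
  Finset.sum_nonneg fun j _ => mul_nonneg (hA i j) (hB j k)

lemma mul_apply_pos_iff {A : Matrix ι κ 𝕜} {B : Matrix κ ν 𝕜} (hA : ∀ i j, 0 ≤ A i j)
    (hB : ∀ i j, 0 ≤ B i j) (i : ι) (k : ν) :
    0 < (A * B) i k ↔ ∃ j, 0 < A i j ∧ 0 < B j k := by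
  simp_rw [mul_apply, Finset.sum_pos_iff_of_nonneg fun j _ => mul_nonneg (hA i j) (hB j k),
    Finset.mem_univ, true_and, (mul_nonneg (hA i _) (hB _ k)).lt_iff_ne', (hA i _).lt_iff_ne',
    (hB _ k).lt_iff_ne', mul_ne_zero_iff]

/-- Cayley–Hamilton: every power of `M` is a combination of the `M ^ p` with `p < card ι`. -/
lemma exists_lt_card_pow_apply_ne_zero {R : Type*} [CommRing R] [Nontrivial R]
    [Fintype ι] [DecidableEq ι] (M : Matrix ι ι R) {k : ℕ} {i j : ι} (h : (M ^ k) i j ≠ 0) :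
    ∃ p < Fintype.card ι, (M ^ p) i j ≠ 0 := by
  have hcard : 0 < Fintype.card ι := Fintype.card_pos_iff.mpr ⟨i⟩
  have hdeg : (Polynomial.X ^ k %ₘ M.charpoly).natDegree < Fintype.card ι := by
    refine (Polynomial.natDegree_modByMonic_lt _ M.charpoly_monic fun h1 => ?_).trans_eq
      M.charpoly_natDegree_eq_dim
    have := M.charpoly_natDegree_eq_dim
    rw [h1, Polynomial.natDegree_one] at this
    omega
  rw [pow_eq_aeval_mod_charpoly, Polynomial.aeval_eq_sum_range' hdeg, sum_apply] at h
  obtain ⟨p, hp, hne⟩ := Finset.exists_ne_zero_of_sum_ne_zero h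
  rw [smul_apply] at hne
  exact ⟨p, Finset.mem_range.mp hp, right_ne_zero_of_smul hne⟩

variable [Fintype ι] [DecidableEq ι] {C : Matrix ι ι 𝕜}

lemma pow_apply_pos_mono (hC : ∀ i j, 0 ≤ C i j) (hdiag : ∀ i, 0 < C i i) {i j : ι} {p q : ℕ}
    (hpq : p ≤ q) (hp : 0 < (C ^ p) i j) : 0 < (C ^ q) i j := by
  induction q, hpq using Nat.le_induction with
  | base => exact hp
  | succ q _ ih =>
    rw [pow_succ]
    exact (mul_apply_pos_iff (pow_apply_nonneg hC q) hC i j).mpr ⟨j, ih, hdiag j⟩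

lemma exists_pow_apply_pos_iff (hC : ∀ i j, 0 ≤ C i j) (hdiag : ∀ i, 0 < C i i) (i j : ι) :
    (∃ p, 0 < (C ^ p) i j) ↔ 0 < (C ^ (Fintype.card ι - 1)) i j := by
  refine ⟨fun ⟨k, hk⟩ => ?_, fun h => ⟨_, h⟩⟩
  obtain ⟨p, hp, hne⟩ := exists_lt_card_pow_apply_ne_zero C hk.ne'
  exact pow_apply_pos_mono hC hdiag (Nat.le_sub_one_of_lt hp)
    ((pow_apply_nonneg hC p i j).lt_of_ne' hne)

end Matrix

def ofBool {m n : ℕ} (X : Matrix (Fin m) (Fin n) Bool) : Matrix (Fin m) (Fin n) ℝ :=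
  X.map fun b => if b then 1 else 0

lemma ofBool_nonneg {m n : ℕ} (X : Matrix (Fin m) (Fin n) Bool) (i j) : 0 ≤ ofBool X i j := by
  by_cases h : X i j <;> simp [ofBool, h]

lemma ofBool_pos_iff {m n : ℕ} (X : Matrix (Fin m) (Fin n) Bool) (i j) :
    0 < ofBool X i j ↔ X i j = true := by
  by_cases h : X i j <;> simp [ofBool, h]

lemma inSparse_ofBool {m n : ℕ} (X : Matrix (Fin m) (Fin n) Bool) : InSparse X (ofBool X) := by
  intro i j h
  simp [ofBool, h]

lemma struct_apply_eq_true_iff_pos {m n : ℕ} {Z : Matrix (Fin m) (Fin n) ℝ} (hZ : ∀ i j, 0 ≤ Z i j)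
    (i j) : Struct Z i j = true ↔ 0 < Z i j := by
  simp [Struct, (hZ i j).lt_iff_ne']

lemma not_inSparse_of_not_leB_struct {m n : ℕ} {Z : Matrix (Fin m) (Fin n) ℝ}
    {S : Matrix (Fin m) (Fin n) Bool} (h : ¬ leB (Struct Z) S) : ¬ InSparse S Z := by
  intro hZ
  refine h fun i j hij => ?_
  by_contra hS
  simp [Struct, hZ i j (by simpa using hS)] at hij

lemma sprod_apply_eq_true_iff {m n p : ℕ} (X : Matrix (Fin m) (Fin n) Bool)
    (Z : Matrix (Fin n) (Fin p) Bool) (i : Fin m) (j : Fin p) :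
    sprod X Z i j = true ↔ ∃ k, X i k = true ∧ Z k j = true := by
  simp [sprod]

lemma pow_apply_pos_iff_spow {n : ℕ} {C : Matrix (Fin n) (Fin n) ℝ}
    {R : Matrix (Fin n) (Fin n) Bool} (hC : ∀ i j, 0 ≤ C i j)
    (hCR : ∀ i j, 0 < C i j ↔ R i j = true) (p : ℕ) (i j : Fin n) :
    0 < (C ^ p) i j ↔ spow R p i j = true := by
  induction p generalizing j with
  | zero => by_cases h : i = j <;> simp [spow, one_apply, h]
  | succ p ih =>
    rw [pow_succ, mul_apply_pos_iff (pow_apply_nonneg hC p) hC, spow, sprod_apply_eq_true_iff]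
    simp only [ih, hCR]

lemma exists_pos_norm_smul_lt_one {E : Type*} [SeminormedAddCommGroup E] [NormedSpace ℝ E]
    (x : E) : ∃ ε : ℝ, 0 < ε ∧ ‖ε • x‖ < 1 := by
  refine ⟨(‖x‖ + 1)⁻¹, by positivity, ?_⟩
  rw [norm_smul, Real.norm_of_nonneg (by positivity), inv_mul_lt_one₀ (by positivity)]
  exact lt_add_one _

section Neumann

attribute [local instance] Matrix.linftyOpNormedRing Matrix.linftyOpNormedAlgebra

variable {ι : Type*} [Fintype ι] [DecidableEq ι] {A : Matrix ι ι ℝ}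

lemma Matrix.summable_pow_apply (h : ‖A‖ < 1) (i j : ι) : Summable fun p => (A ^ p) i j := by
  have hsum := summable_geometric_of_norm_lt_one h
  exact Pi.summable.mp (Pi.summable.mp hsum i) j

lemma Matrix.one_sub_inv_apply_eq_tsum (h : ‖A‖ < 1) (i j : ι) :
    (1 - A)⁻¹ i j = ∑' p, (A ^ p) i j := by
  have hsum := summable_geometric_of_norm_lt_one h
  rw [inv_eq_right_inv (mul_neg_geom_series A h)]
  exact (congrFun (tsum_apply hsum) j).trans (tsum_apply (Pi.summable.mp hsum i))

lemma Matrix.one_sub_inv_apply_nonneg (hA : ∀ i j, 0 ≤ A i j) (h : ‖A‖ < 1) (i j : ι) :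
    0 ≤ (1 - A)⁻¹ i j := by
  rw [one_sub_inv_apply_eq_tsum h]
  exact tsum_nonneg fun p => pow_apply_nonneg hA p i j

lemma Matrix.one_sub_inv_apply_pos_iff (hA : ∀ i j, 0 ≤ A i j) (h : ‖A‖ < 1) (i j : ι) :
    0 < (1 - A)⁻¹ i j ↔ ∃ p, 0 < (A ^ p) i j := by
  rw [one_sub_inv_apply_eq_tsum h]
  refine ⟨fun hpos => ?_, fun ⟨p, hp⟩ =>
    (summable_pow_apply h i j).tsum_pos (fun p => pow_apply_nonneg hA p i j) p hp⟩
  by_contra! hzero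
  have : ∀ p, (A ^ p) i j = 0 := fun p => (hzero p).antisymm (pow_apply_nonneg hA p i j)
  simp [this] at hpos

theorem exists_isUnit_inSparse_inv_pos_iff_spow {n : ℕ} (R : Matrix (Fin n) (Fin n) Bool)
    (hdiag : ∀ i, R i i = true) :
    ∃ X : Matrix (Fin n) (Fin n) ℝ, IsUnit X ∧ InSparse R X ∧ (∀ i j, 0 ≤ X⁻¹ i j) ∧
      ∀ i j, 0 < X⁻¹ i j ↔ spow R (n - 1) i j = true := by
  obtain ⟨ε, hε, hnorm⟩ := exists_pos_norm_smul_lt_one (ofBool R)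
  set C := ε • ofBool R
  have hC : ∀ i j, 0 ≤ C i j := fun i j => mul_nonneg hε.le (ofBool_nonneg R i j)
  have hCR : ∀ i j, 0 < C i j ↔ R i j = true := fun i j =>
    (mul_pos_iff_of_pos_left hε).trans (ofBool_pos_iff R i j)
  have hCdiag : ∀ i, 0 < C i i := fun i => (hCR i i).mpr (hdiag i)
  refine ⟨1 - C, isUnit_one_sub_of_norm_lt_one hnorm, fun i j hij => ?_,
    one_sub_inv_apply_nonneg hC hnorm, fun i j => ?_⟩
  · have hne : i ≠ j := by rintro rfl; simp [hdiag] at hij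
    have hCij : C i j = 0 := ((hC i j).eq_of_not_lt (by simp [hCR, hij])).symm
    simp [one_apply_ne hne, hCij]
  · rw [one_sub_inv_apply_pos_iff hC hnorm, exists_pow_apply_pos_iff hC hCdiag, Fintype.card_fin,
      pow_apply_pos_iff_spow hC hCR]

end Neumann

/-- for binary `T` and binary `R ≥ Iₙ`, there exist an
invertible `X ∈ Sparse(R)` and `Y ∈ Sparse(T)` with
`Struct(Y X⁻¹) = T R^{n-1}`; in particular, if `T R^{n-1} ≰ S` then some
`Y ∈ Sparse(T)` and invertible `X ∈ Sparse(R)` give `Y X⁻¹ ∉ Sparse(S)`. -/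
theorem exists_factors_achieving_struct_TRpow {m n : ℕ}
    (T : Matrix (Fin m) (Fin n) Bool) (R : Matrix (Fin n) (Fin n) Bool)
    (hdiag : ∀ i, R i i = true) :
    (∃ (X : Matrix (Fin n) (Fin n) ℝ) (Y : Matrix (Fin m) (Fin n) ℝ),
        IsUnit X ∧ InSparse R X ∧ InSparse T Y ∧
        Struct (Y * X⁻¹) = sprod T (spow R (n - 1))) ∧
    (∀ S : Matrix (Fin m) (Fin n) Bool, ¬ leB (sprod T (spow R (n - 1))) S →
      ∃ (Y : Matrix (Fin m) (Fin n) ℝ) (X : Matrix (Fin n) (Fin n) ℝ),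
        InSparse T Y ∧ IsUnit X ∧ InSparse R X ∧ ¬ InSparse S (Y * X⁻¹)) := by
  obtain ⟨X, hXunit, hXR, hXinv_nonneg, hXinv_pos⟩ :=
    exists_isUnit_inSparse_inv_pos_iff_spow R hdiag
  have hYX_nonneg := mul_apply_nonneg (ofBool_nonneg T) hXinv_nonneg
  have hstruct : Struct (ofBool T * X⁻¹) = sprod T (spow R (n - 1)) := by
    ext i j
    rw [Bool.eq_iff_iff, struct_apply_eq_true_iff_pos hYX_nonneg,
      mul_apply_pos_iff (ofBool_nonneg T) hXinv_nonneg, sprod_apply_eq_true_iff]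
    simp only [ofBool_pos_iff, hXinv_pos]
  refine ⟨⟨X, ofBool T, hXunit, hXR, inSparse_ofBool T, hstruct⟩,
    fun S hS => ⟨ofBool T, X, inSparse_ofBool T, hXunit, hXR, ?_⟩⟩
  rw [← hstruct] at hS
  exact not_inSparse_of_not_leB_struct hS
end
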